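/- Let d ≥ 1, T₀ > 0 and C_B > 0. Then there exist C > 0 and ε₀ ∈ (0,1] such that for every ε ∈ (0,ε₀], every continuous B̂ : [0,T₀] → ℓ¹₂(ℤ^d) with sup_{T∈[0,T₀]} ‖B̂(T)‖_{ℓ¹₂} ≤ C_B, and every t ∈ [0, T₀/ε²]: Σ_{K∈ℤ^d, ε|K| ≥ 1/10 and |εK+2e₁| ≥ 1/10} |∫₀^t e^{λ(e₁+εK)(t−τ)} (−4ε⁴K₁³ − ε⁵K₁⁴) B̂(K, ε²τ) dτ| ≤ C ε³. -/

import Mathlib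

/-!
On the stable set, write `a = εK₁`, `P = ε²|K_⊥|²` and `L = -λ(e₁ + εK) = a²(a+2)² + 4P`. The
two distance conditions give `L ≥ 1/40000`, and the multiplier `-ε(4a³ + a⁴)` is at most
`ε (L + 4ε²|K|²) ≤ 829 ε³ |K|² √L` in size. Since `√L e^{-Ls} ≤ s^{-1/2} e^{-Ls/2}`, every mode
is dominated, uniformly in `K`, by `829 ε³ (1 + |K|²) ‖B̂(K, ε²τ)‖` times the kernel
`s^{-1/2} e^{-s/80000}` at `s = t - τ`. Summing the modes under the time integral uses the `ℓ¹₂`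
bound `C_B`, and the kernel has integral `√(80000 π)` over `(0, ∞)` by the Gamma function.
-/

/-- The weight `(1 + |K|²)^{r/2}` on the lattice `ℤ^d`. -/
noncomputable def wt (d : ℕ) (r : ℝ) (K : Fin d → ℤ) : ℝ :=
  (1 + ∑ i, ((K i : ℝ)) ^ 2) ^ (r / 2)

/-- Continuity of `T ↦ B(T)` on `[0,T₀]` with respect to the `ℓ¹_r` norm. -/
def NormContOn (d : ℕ) (r T₀ : ℝ) (B : ℝ → (Fin d → ℤ) → ℂ) : Prop :=
  ∀ T ∈ Set.Icc (0 : ℝ) T₀, ∀ η > 0, ∃ ν > 0, ∀ T' ∈ Set.Icc (0 : ℝ) T₀,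
    |T' - T| < ν → ∑' K : Fin d → ℤ, ‖B T' K - B T K‖ * wt d r K < η

open MeasureTheory Set Real Finset

noncomputable def sqrtExpKernel (r s : ℝ) : ℝ := s ^ (-(1 / 2 : ℝ)) * exp (-(r * s))

lemma sqrtExpKernel_nonneg (r : ℝ) {s : ℝ} (hs : 0 ≤ s) : 0 ≤ sqrtExpKernel r s :=
  mul_nonneg (rpow_nonneg hs _) (exp_nonneg _)

lemma integrableOn_sqrtExpKernel {r : ℝ} (hr : 0 < r) : IntegrableOn (sqrtExpKernel r) (Ioi 0) := by
  refine (integrableOn_rpow_mul_exp_neg_mul_rpow (s := -(1 / 2)) (by norm_num) one_pos hr).congr_fun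
    (fun s _ => ?_) measurableSet_Ioi
  simp [sqrtExpKernel, rpow_one]

lemma integral_sqrtExpKernel {r : ℝ} (hr : 0 < r) :
    ∫ s in Ioi 0, sqrtExpKernel r s = √(π / r) := by
  have h := integral_rpow_mul_exp_neg_mul_Ioi (a := 1 / 2) (by norm_num) hr
  rw [Gamma_one_half_eq, show (1 / 2 : ℝ) - 1 = -(1 / 2) by norm_num] at h
  rw [show sqrtExpKernel r = fun s => s ^ (-(1 / 2 : ℝ)) * exp (-(r * s)) from rfl, h,
    ← sqrt_eq_rpow, ← sqrt_mul (by positivity), one_div_mul_eq_div]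

lemma intervalIntegrable_sqrtExpKernel_sub {r : ℝ} (hr : 0 < r) {t : ℝ} (ht : 0 ≤ t) :
    IntervalIntegrable (fun τ => sqrtExpKernel r (t - τ)) volume 0 t := by
  have h : IntervalIntegrable (sqrtExpKernel r) volume 0 t :=
    (intervalIntegrable_iff_integrableOn_Ioc_of_le ht).2
      ((integrableOn_sqrtExpKernel hr).mono_set Ioc_subset_Ioi_self)
  simpa using (h.comp_sub_left t).symm

lemma integral_sqrtExpKernel_sub_le {r : ℝ} (hr : 0 < r) {t : ℝ} (ht : 0 ≤ t) :
    ∫ τ in 0..t, sqrtExpKernel r (t - τ) ≤ √(π / r) := by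
  rw [intervalIntegral.integral_comp_sub_left (sqrtExpKernel r), sub_self, sub_zero,
    intervalIntegral.integral_of_le ht, ← integral_sqrtExpKernel hr]
  exact setIntegral_mono_set (integrableOn_sqrtExpKernel hr)
    ((ae_restrict_mem measurableSet_Ioi).mono fun s hs => sqrtExpKernel_nonneg r (le_of_lt hs))
    Ioc_subset_Ioi_self.eventuallyLE

lemma sqrt_mul_exp_neg_mul_le {L s : ℝ} (hL : 0 ≤ L) (hs : 0 < s) :
    √L * exp (-(L * s)) ≤ s ^ (-(1 / 2 : ℝ)) * exp (-(L * s / 2)) := by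
  have hmax : √(L * s) * exp (-(L * s / 2)) ≤ 1 := by
    rw [← le_div_iff₀ (exp_pos _), exp_neg, div_inv_eq_mul, one_mul,
      sqrt_le_left (exp_pos _).le]
    calc L * s ≤ exp (L * s) := (le_add_of_nonneg_right zero_le_one).trans (add_one_le_exp _)
      _ = exp (L * s / 2) ^ 2 := by rw [sq, ← exp_add]; ring_nf
  have hsplit : √L * exp (-(L * s))
      = s ^ (-(1 / 2 : ℝ)) * exp (-(L * s / 2)) * (√(L * s) * exp (-(L * s / 2))) := by
    have hexp : exp (-(L * s)) = exp (-(L * s / 2)) * exp (-(L * s / 2)) := by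
      rw [← exp_add]; ring_nf
    have hs' : √s ≠ 0 := (sqrt_pos.2 hs).ne'
    rw [rpow_neg hs.le, ← sqrt_eq_rpow, sqrt_mul hL, hexp]
    field_simp
  rw [hsplit]
  exact mul_le_of_le_one_right (by positivity) hmax

/-- `decayRate (εK₁) (ε²|K_⊥|²) = -λ(e₁ + εK)`. -/
def decayRate (a P : ℝ) : ℝ := (1 - (1 + a) ^ 2) ^ 2 + 4 * P

lemma le_decayRate {a P : ℝ} (hP : 0 ≤ P) (h₁ : 1 / 100 ≤ a ^ 2 + P)
    (h₂ : 1 / 100 ≤ (a + 2) ^ 2 + P) : 1 / 40000 ≤ decayRate a P := by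
  rw [decayRate]
  rcases le_or_gt (1 / 200) P with hP' | hP'
  · nlinarith [sq_nonneg (1 - (1 + a) ^ 2)]
  · have ha : 1 / 200 ≤ a ^ 2 := by linarith
    have ha₂ : 1 / 200 ≤ (a + 2) ^ 2 := by linarith
    nlinarith [mul_le_mul ha ha₂ (by norm_num) (sq_nonneg a)]

lemma decayRate_le {a P : ℝ} (hP : 0 ≤ P) :
    decayRate a P ≤ 8 * (a ^ 2 + P) + 2 * (a ^ 2 + P) ^ 2 := by
  rw [decayRate]
  nlinarith [sq_nonneg (a * (a - 2)), mul_nonneg (sq_nonneg a) hP, sq_nonneg P]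

lemma abs_four_mul_pow_three_add_pow_four_le (a : ℝ) {P : ℝ} (hP : 0 ≤ P) :
    |4 * a ^ 3 + a ^ 4| ≤ decayRate a P + 4 * (a ^ 2 + P) := by
  rw [decayRate, abs_le]
  constructor <;> nlinarith [sq_nonneg (a * (a + 2)), sq_nonneg a]

lemma add_four_mul_le_mul_sqrt {L x : ℝ} (hL : 1 / 40000 ≤ L) (hx : 1 / 100 ≤ x)
    (hLx : L ≤ 8 * x + 2 * x ^ 2) : L + 4 * x ≤ 829 * x * √L := by
  have hsqrtL : 1 / 200 ≤ √L := by
    rw [le_sqrt (by norm_num) (by linarith)]; linarith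
  have hsqrtL' : √L ≤ 29 * x := by
    rw [sqrt_le_left (by linarith)]; nlinarith
  have hL' : L = √L * √L := (mul_self_sqrt (by linarith)).symm
  nlinarith

lemma exp_neg_decayRate_mul_abs_le {a P s : ℝ} (hP : 0 ≤ P) (h₁ : 1 / 100 ≤ a ^ 2 + P)
    (h₂ : 1 / 100 ≤ (a + 2) ^ 2 + P) (hs : 0 < s) :
    exp (-(decayRate a P * s)) * |4 * a ^ 3 + a ^ 4|
      ≤ 829 * (a ^ 2 + P) * sqrtExpKernel (1 / 80000) s := by
  set L := decayRate a P
  set x := a ^ 2 + P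
  have hL : 1 / 40000 ≤ L := le_decayRate hP h₁ h₂
  calc exp (-(L * s)) * |4 * a ^ 3 + a ^ 4| ≤ exp (-(L * s)) * (829 * x * √L) := by
        gcongr
        exact (abs_four_mul_pow_three_add_pow_four_le a hP).trans
          (add_four_mul_le_mul_sqrt hL h₁ (decayRate_le hP))
    _ = 829 * x * (√L * exp (-(L * s))) := by ring
    _ ≤ 829 * x * (s ^ (-(1 / 2 : ℝ)) * exp (-(L * s / 2))) :=
        mul_le_mul_of_nonneg_left (sqrt_mul_exp_neg_mul_le (by linarith) hs) (by linarith)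
    _ ≤ 829 * x * sqrtExpKernel (1 / 80000) s := by
        unfold sqrtExpKernel
        gcongr
        nlinarith

lemma sum_sq_add_ite {ι : Type*} [Fintype ι] [DecidableEq ι] (f : ι → ℝ) (i₀ : ι) (c : ℝ) :
    ∑ i, (f i + if i = i₀ then c else 0) ^ 2
      = (f i₀ + c) ^ 2 + ∑ i ∈ univ.filter (· ≠ i₀), f i ^ 2 := by
  rw [filter_ne', ← add_sum_erase _ _ (mem_univ i₀), if_pos rfl]
  congr 1
  exact sum_congr rfl fun i hi => by rw [if_neg (ne_of_mem_erase hi), add_zero]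

lemma wt_pos (d : ℕ) (r : ℝ) (K : Fin d → ℤ) : 0 < wt d r K :=
  rpow_pos_of_pos (by positivity) _

lemma wt_two (d : ℕ) (K : Fin d → ℤ) : wt d 2 K = 1 + ∑ i, (K i : ℝ) ^ 2 := by
  rw [wt, div_self two_ne_zero, rpow_one]

lemma abs_stable_mode_le {d : ℕ} (i₀ : Fin d) {ε s : ℝ} (hε : 0 < ε) (hs : 0 < s)
    (K : Fin d → ℤ) (h₁ : 1 / 10 ≤ ε * √(∑ i, (K i : ℝ) ^ 2))
    (h₂ : 1 / 10 ≤ √(∑ i, (ε * (K i : ℝ) + if i = i₀ then 2 else 0) ^ 2)) :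
    |exp ((-(1 - (1 + ε * (K i₀ : ℝ)) ^ 2) ^ 2
        - 4 * ∑ i ∈ univ.filter (fun i => i ≠ i₀), (ε * (K i : ℝ)) ^ 2) * s)
      * (-4 * ε ^ 4 * (K i₀ : ℝ) ^ 3 - ε ^ 5 * (K i₀ : ℝ) ^ 4)|
      ≤ 829 * ε ^ 3 * wt d 2 K * sqrtExpKernel (1 / 80000) s := by
  set a := ε * (K i₀ : ℝ)
  set P := ∑ i ∈ univ.filter (fun i => i ≠ i₀), (ε * (K i : ℝ)) ^ 2
  have hP : 0 ≤ P := sum_nonneg fun i _ => sq_nonneg _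
  have hS : 0 ≤ ∑ i, (K i : ℝ) ^ 2 := sum_nonneg fun i _ => sq_nonneg _
  have hx : ε ^ 2 * ∑ i, (K i : ℝ) ^ 2 = a ^ 2 + P := by
    have h := sum_sq_add_ite (fun i => ε * (K i : ℝ)) i₀ 0
    simp only [ite_self, add_zero] at h
    simpa only [mul_sum, ← mul_pow] using h
  have h₁' : 1 / 100 ≤ a ^ 2 + P := by
    rw [← hx]
    nlinarith [sq_sqrt hS, pow_le_pow_left₀ (by norm_num) h₁ 2]
  have h₂' : 1 / 100 ≤ (a + 2) ^ 2 + P := by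
    have h := (le_sqrt' (by norm_num)).1 h₂
    rw [sum_sq_add_ite] at h
    linarith
  rw [show -4 * ε ^ 4 * (K i₀ : ℝ) ^ 3 - ε ^ 5 * (K i₀ : ℝ) ^ 4 = -(ε * (4 * a ^ 3 + a ^ 4)) by
    ring, show (-(1 - (1 + a) ^ 2) ^ 2 - 4 * P) * s = -(decayRate a P * s) by rw [decayRate]; ring,
    abs_mul, abs_exp, abs_neg, abs_mul, abs_of_pos hε, wt_two]
  have hκ := sqrtExpKernel_nonneg (1 / 80000) hs.le
  calc exp (-(decayRate a P * s)) * (ε * |4 * a ^ 3 + a ^ 4|)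
      = ε * (exp (-(decayRate a P * s)) * |4 * a ^ 3 + a ^ 4|) := by ring
    _ ≤ ε * (829 * (a ^ 2 + P) * sqrtExpKernel (1 / 80000) s) :=
        mul_le_mul_of_nonneg_left (exp_neg_decayRate_mul_abs_le hP h₁' h₂' hs) hε.le
    _ ≤ 829 * ε ^ 3 * (1 + ∑ i, (K i : ℝ) ^ 2) * sqrtExpKernel (1 / 80000) s := by
        rw [← hx]; nlinarith [mul_nonneg (mul_nonneg hε.le hε.le) hε.le]

lemma NormContOn.continuousOn_apply {d : ℕ} {r T₀ : ℝ} {B : ℝ → (Fin d → ℤ) → ℂ}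
    (hB : NormContOn d r T₀ B)
    (hsum : ∀ T ∈ Icc 0 T₀, Summable fun K => ‖B T K‖ * wt d r K) (K : Fin d → ℤ) :
    ContinuousOn (fun T => B T K) (Icc 0 T₀) := by
  have hw := wt_pos d r
  rw [Metric.continuousOn_iff]
  intro T hT η hη
  obtain ⟨ν, hν, hclose⟩ := hB T hT (η * wt d r K) (mul_pos hη (hw K))
  refine ⟨ν, hν, fun T' hT' hTT' => ?_⟩
  have hdiff : Summable fun K => ‖B T' K - B T K‖ * wt d r K :=
    .of_nonneg_of_le (fun K => mul_nonneg (norm_nonneg _) (hw K).le)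
      (fun K => (mul_le_mul_of_nonneg_right (norm_sub_le _ _) (hw K).le).trans_eq (add_mul _ _ _))
      ((hsum T' hT').add (hsum T hT))
  have hK := hdiff.le_tsum K fun K _ => mul_nonneg (norm_nonneg _) (hw K).le
  rw [dist_eq_norm]
  exact lt_of_mul_lt_mul_right (hK.trans_lt (hclose T' hT' hTT')) (hw K).le

section IntervalIntegral

variable {E : Type*} [NormedAddCommGroup E] {g : ℝ → ℝ} {t : ℝ}

lemma IntervalIntegrable.mul_norm_mul_const (hg : IntervalIntegrable g volume 0 t) (ht : 0 ≤ t)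
    {b : ℝ → E} (hb : ContinuousOn b (Icc 0 t)) (w : ℝ) :
    IntervalIntegrable (fun τ => g τ * (‖b τ‖ * w)) volume 0 t :=
  hg.mul_continuousOn (by rw [uIcc_of_le ht]; exact hb.norm.mul continuousOn_const)

lemma norm_integral_smul_le_of_abs_le [NormedSpace ℝ E] (hg : IntervalIntegrable g volume 0 t)
    (ht : 0 ≤ t) {f : ℝ → ℝ} {b : ℝ → E} (hb : ContinuousOn b (Icc 0 t)) {w : ℝ}
    (hf : ∀ τ ∈ Ioo 0 t, |f τ| ≤ g τ * w) :
    ‖∫ τ in 0..t, f τ • b τ‖ ≤ ∫ τ in 0..t, g τ * (‖b τ‖ * w) := by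
  refine intervalIntegral.norm_integral_le_of_norm_le ht ?_ (hg.mul_norm_mul_const ht hb w)
  filter_upwards [(countable_singleton t).ae_notMem volume] with τ hτt hτ
  rw [norm_smul, Real.norm_eq_abs, ← mul_assoc, mul_right_comm]
  exact mul_le_mul_of_nonneg_right (hf τ ⟨hτ.1, lt_of_le_of_ne hτ.2 hτt⟩) (norm_nonneg _)

lemma sum_integral_mul_le {ι : Type*} (s : Finset ι) (hg : IntervalIntegrable g volume 0 t)
    (ht : 0 ≤ t) (hg0 : ∀ τ ∈ Icc 0 t, 0 ≤ g τ) {b : ι → ℝ → E}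
    (hb : ∀ i, ContinuousOn (b i) (Icc 0 t)) {w : ι → ℝ} {M : ℝ}
    (hM : ∀ τ ∈ Icc 0 t, ∑ i ∈ s, ‖b i τ‖ * w i ≤ M) :
    ∑ i ∈ s, ∫ τ in 0..t, g τ * (‖b i τ‖ * w i) ≤ M * ∫ τ in 0..t, g τ := by
  have hint := fun i => hg.mul_norm_mul_const ht (hb i) (w i)
  rw [← intervalIntegral.integral_finsetSum fun i _ => hint i,
    ← intervalIntegral.integral_const_mul]
  have hsum : IntervalIntegrable (fun τ => ∑ i ∈ s, g τ * (‖b i τ‖ * w i)) volume 0 t := by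
    simpa only [Finset.sum_fn] using IntervalIntegrable.sum s fun i _ => hint i
  refine intervalIntegral.integral_mono_on ht hsum (hg.const_mul M) fun τ hτ => ?_
  rw [← mul_sum, mul_comm M]
  exact mul_le_mul_of_nonneg_left (hM τ hτ) (hg0 τ hτ)

end IntervalIntegral

theorem stable_linear_residual_B_general (d : ℕ) (hd : 0 < d)
    (T₀ CB : ℝ) (hCB : 0 < CB) :
    ∃ C > 0, ∃ ε₀ ∈ Set.Ioc (0 : ℝ) 1, ∀ ε ∈ Set.Ioc (0 : ℝ) ε₀,
      ∀ B : ℝ → (Fin d → ℤ) → ℂ,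
        NormContOn d 2 T₀ B →
        (∀ T ∈ Set.Icc (0 : ℝ) T₀, Summable (fun K => ‖B T K‖ * wt d 2 K)) →
        (∀ T ∈ Set.Icc (0 : ℝ) T₀, ∑' K : Fin d → ℤ, ‖B T K‖ * wt d 2 K ≤ CB) →
        ∀ t ∈ Set.Icc (0 : ℝ) (T₀ / ε ^ 2),
          (∑' K : Fin d → ℤ,
            if (1 / 10 ≤ ε * Real.sqrt (∑ i, ((K i : ℝ)) ^ 2)
                ∧ 1 / 10 ≤ Real.sqrt (∑ i, (ε * (K i : ℝ)
                  + if i = (⟨0, hd⟩ : Fin d) then 2 else 0) ^ 2)) then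
              ‖∫ τ in (0 : ℝ)..t,
                (Real.exp ((-(1 - (1 + ε * (K ⟨0, hd⟩ : ℝ)) ^ 2) ^ 2
                      - 4 * ∑ i ∈ Finset.univ.filter (fun i => i ≠ (⟨0, hd⟩ : Fin d)),
                          (ε * (K i : ℝ)) ^ 2) * (t - τ))
                    * (-4 * ε ^ 4 * (K ⟨0, hd⟩ : ℝ) ^ 3
                      - ε ^ 5 * (K ⟨0, hd⟩ : ℝ) ^ 4)) • B (ε ^ 2 * τ) K‖
            else 0) ≤ C * ε ^ 3 := by
  refine ⟨829 * CB * √(π / (1 / 80000)), by positivity, 1, ⟨one_pos, le_rfl⟩, ?_⟩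
  rintro ε ⟨hε, -⟩ B hBcont hBsum hBle t ⟨ht, htT⟩
  have hτT : ∀ τ ∈ Icc 0 t, ε ^ 2 * τ ∈ Icc 0 T₀ := fun τ hτ =>
    ⟨by have := hτ.1; positivity,
      (mul_le_mul_of_nonneg_left hτ.2 (by positivity)).trans ((le_div_iff₀' (by positivity)).1 htT)⟩
  have hB : ∀ K, ContinuousOn (fun τ => B (ε ^ 2 * τ) K) (Icc 0 t) := fun K =>
    (hBcont.continuousOn_apply hBsum K).comp (continuous_const.mul continuous_id).continuousOn hτT
  set g := fun τ => 829 * ε ^ 3 * sqrtExpKernel (1 / 80000) (t - τ)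
  have hg : IntervalIntegrable g volume 0 t :=
    (intervalIntegrable_sqrtExpKernel_sub (by norm_num) ht).const_mul _
  have hg0 : ∀ τ ∈ Icc 0 t, 0 ≤ g τ := fun τ hτ =>
    mul_nonneg (by positivity) (sqrtExpKernel_nonneg _ (sub_nonneg.2 hτ.2))
  refine tsum_le_of_sum_le' (by positivity) fun s => ?_
  calc _ ≤ ∑ K ∈ s, ∫ τ in 0..t, g τ * (‖B (ε ^ 2 * τ) K‖ * wt d 2 K) := by
        refine sum_le_sum fun K _ => ?_
        split_ifs with hK
        · refine norm_integral_smul_le_of_abs_le hg ht (hB K) fun τ hτ => ?_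
          exact (abs_stable_mode_le _ hε (sub_pos.2 hτ.2) K hK.1 hK.2).trans_eq (by ring)
        · exact intervalIntegral.integral_nonneg ht fun τ hτ =>
            mul_nonneg (hg0 τ hτ) (mul_nonneg (norm_nonneg _) (wt_pos ..).le)
    _ ≤ CB * ∫ τ in 0..t, g τ := sum_integral_mul_le s hg ht hg0 hB fun τ hτ =>
        ((hBsum _ (hτT τ hτ)).sum_le_tsum s fun K _ =>
          mul_nonneg (norm_nonneg _) (wt_pos ..).le).trans (hBle _ (hτT τ hτ))
    _ ≤ CB * (829 * ε ^ 3 * √(π / (1 / 80000))) := by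
        rw [intervalIntegral.integral_const_mul]
        gcongr
        exact integral_sqrtExpKernel_sub_le (by norm_num) ht
    _ = 829 * CB * √(π / (1 / 80000)) * ε ^ 3 := by ring

/-- the stable-mode Duhamel contribution of the linear residual
term involving the regular part `B̂ ∈ ℓ¹₂` (wave vectors `k = e₁ + εK` with
`|k − e₁| = ε|K| ≥ 1/10` and `|k + e₁| = |εK + 2e₁| ≥ 1/10`) is `O(ε³)`
uniformly on `[0, T₀/ε²]`. -/
theorem stable_linear_residual_B (d : ℕ) (hd : 0 < d)
    (T₀ CB : ℝ) (hT₀ : 0 < T₀) (hCB : 0 < CB) :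
    ∃ C > 0, ∃ ε₀ ∈ Set.Ioc (0 : ℝ) 1, ∀ ε ∈ Set.Ioc (0 : ℝ) ε₀,
      ∀ B : ℝ → (Fin d → ℤ) → ℂ,
        NormContOn d 2 T₀ B →
        (∀ T ∈ Set.Icc (0 : ℝ) T₀, Summable (fun K => ‖B T K‖ * wt d 2 K)) →
        (∀ T ∈ Set.Icc (0 : ℝ) T₀, ∑' K : Fin d → ℤ, ‖B T K‖ * wt d 2 K ≤ CB) →
        ∀ t ∈ Set.Icc (0 : ℝ) (T₀ / ε ^ 2),
          (∑' K : Fin d → ℤ,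
            if (1 / 10 ≤ ε * Real.sqrt (∑ i, ((K i : ℝ)) ^ 2)
                ∧ 1 / 10 ≤ Real.sqrt (∑ i, (ε * (K i : ℝ)
                  + if i = (⟨0, hd⟩ : Fin d) then 2 else 0) ^ 2)) then
              ‖∫ τ in (0 : ℝ)..t,
                (Real.exp ((-(1 - (1 + ε * (K ⟨0, hd⟩ : ℝ)) ^ 2) ^ 2
                      - 4 * ∑ i ∈ Finset.univ.filter (fun i => i ≠ (⟨0, hd⟩ : Fin d)),
                          (ε * (K i : ℝ)) ^ 2) * (t - τ))
                    * (-4 * ε ^ 4 * (K ⟨0, hd⟩ : ℝ) ^ 3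
                      - ε ^ 5 * (K ⟨0, hd⟩ : ℝ) ^ 4)) • B (ε ^ 2 * τ) K‖
            else 0) ≤ C * ε ^ 3 :=
  stable_linear_residual_B_general d hd T₀ CB hCB
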